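/- arXiv:1903.05824 — 6 statements merged into one kernel-verified Lean document; each statement's English description precedes it below -/
import Mathlib

section
/- For all positive integers n, m, s, if δ = ⌊s^{1/n}·(m+n-1) - n + 1⌋ (assumed nonnegative), then the product (δ+n)(δ+n-1)⋯(δ+1) is strictly greater than s·(m+n-1)(m+n-2)⋯m, i.e., binom(δ+n, n) > binom(m+n-1, n)·s. -/
/-!
Put `r = s^{1/n} ≥ 1`. The floor condition gives `r (m+n-1) < δ + n`, hence for every `i < n`
`r (m+n-1-i) ≤ r (m+n-1) - i < δ+n-i`. Multiplying these `n` inequalities between positive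
numbers gives `s (m+n-1)⋯m = r^n (m+n-1)⋯m < (δ+n)⋯(δ+1)`, and dividing by `n!` gives the
binomial form.
-/

open Finset

theorem pow_mul_descPochhammer_eval_lt_descPochhammer_eval {n : ℕ} {r a b : ℝ} (hn : 0 < n)
    (hr : 1 ≤ r) (ha : (n : ℝ) - 1 < a) (hab : r * a < b) :
    r ^ n * (descPochhammer ℝ n).eval a < (descPochhammer ℝ n).eval b := by
  rw [descPochhammer_eval_eq_prod_range, descPochhammer_eval_eq_prod_range]
  nth_rw 1 [← card_range n]
  rw [← prod_const, ← prod_mul_distrib]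
  refine prod_lt_prod_of_nonempty (fun j hj ↦ ?_) (fun j hj ↦ ?_) (nonempty_range_iff.mpr hn.ne')
  · have hj : (j : ℝ) + 1 ≤ n := by exact_mod_cast mem_range.mp hj
    have : 0 < a - j := by linarith
    positivity
  · have : (j : ℝ) ≤ r * j := le_mul_of_one_le_left j.cast_nonneg hr
    linarith

theorem Nat.mul_descFactorial_lt_descFactorial {n k N s : ℕ} (hn : 0 < n) (hs : 0 < s)
    (hk : n ≤ k) (h : (s : ℝ) ^ (n : ℝ)⁻¹ * k < N) :
    s * k.descFactorial n < N.descFactorial n := by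
  have hr : 1 ≤ (s : ℝ) ^ (n : ℝ)⁻¹ :=
    Real.one_le_rpow (by exact_mod_cast hs) (by positivity)
  have hk' : (n : ℝ) - 1 < k := by
    have : (n : ℝ) ≤ k := by exact_mod_cast hk
    linarith
  have key := pow_mul_descPochhammer_eval_lt_descPochhammer_eval hn hr hk' h
  rw [Real.rpow_inv_natCast_pow s.cast_nonneg hn.ne', descPochhammer_eval_eq_descFactorial,
    descPochhammer_eval_eq_descFactorial] at key
  exact_mod_cast key

/-- If `δ = ⌊s^{1/n}·(m+n-1) - n + 1⌋` is nonnegative, then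
`(δ+n)(δ+n-1)⋯(δ+1) > s·(m+n-1)(m+n-2)⋯m`, i.e.
`binom(δ+n, n) > binom(m+n-1, n)·s`. -/
theorem stmt_1 (n m s : ℕ) (hn : 0 < n) (hm : 0 < m) (hs : 0 < s)
    (δ : ℕ) (hδ : (δ : ℤ) = ⌊(s : ℝ) ^ ((n : ℝ)⁻¹) * ((m : ℝ) + n - 1) - n + 1⌋) :
    (∏ i ∈ Finset.range n, (δ + n - i)) > s * ∏ i ∈ Finset.range n, (m + n - 1 - i) ∧
    (δ + n).choose n > (m + n - 1).choose n * s := by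
  have hfloor : (s : ℝ) ^ (n : ℝ)⁻¹ * ((m + n - 1 : ℕ) : ℝ) < ((δ + n : ℕ) : ℝ) := by
    have := Int.lt_floor_add_one ((s : ℝ) ^ ((n : ℝ)⁻¹) * ((m : ℝ) + n - 1) - n + 1)
    rw [← hδ] at this
    push_cast [Nat.cast_sub (by omega : 1 ≤ m + n)] at this ⊢
    linarith
  have hdesc := Nat.mul_descFactorial_lt_descFactorial hn hs (by omega) hfloor
  refine ⟨by simpa only [Nat.descFactorial_eq_prod_range] using hdesc, ?_⟩
  rw [Nat.descFactorial_eq_factorial_mul_choose, Nat.descFactorial_eq_factorial_mul_choose,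
    mul_left_comm, mul_comm s] at hdesc
  exact Nat.lt_of_mul_lt_mul_left hdesc
end

section
/- Let n ≥ 2, k ≥ 2, m ≥ 1 be integers and 0 < ε < 1 a real number with m ≤ (n-1)(k-2)/(2ε) + 1. Set A = k² - (k+ε)², B = (n-1)(k² - (1+2ε)k - ε²) + 2k, C = ((2k-1)(n-1)/2 + 1)² - ((k+ε)(n-1)/2)². Then Am² + Bm + C > 0. -/
/-!
The quadratic `f(m) = A m² + B m + C` is concave (`A = -ε(2k + ε) < 0`), so it is positive on the
whole interval `[0, M]`, `M = (n-1)(k-2)/(2ε) + 1`, once it is positive at both endpoints.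
At `0` this is `C > 0`, a difference of squares with both factors positive; at `M` it follows
from the factorisation
`4ε² f(M) = ε(1-ε)(n+1)(ε(5+ε)(n+1) + 4(k-2)(n-1+εn) + 2(k-2)²(n-1))`.
-/

/-- Multiplying by `M`, `f(x)` is `(M-x) f(0) + x f(M)` plus the nonnegative concavity term. -/
lemma quadratic_pos_of_mem_Icc {A B C M x : ℝ} (hA : A ≤ 0) (hC : 0 < C)
    (hM : 0 < A * M ^ 2 + B * M + C) (hx : 0 ≤ x) (hxM : x ≤ M) :
    0 < A * x ^ 2 + B * x + C := by
  rcases hx.eq_or_lt with rfl | hx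
  · simpa using hC
  have hM0 : 0 < M := hx.trans_le hxM
  have key : M * (A * x ^ 2 + B * x + C) =
      (M - x) * C + x * (A * M ^ 2 + B * M + C) + (-A) * x * M * (M - x) := by ring
  have hpos : 0 < (M - x) * C + x * (A * M ^ 2 + B * M + C) + (-A) * x * M * (M - x) := by
    have h₁ : 0 ≤ (M - x) * C := mul_nonneg (sub_nonneg.2 hxM) hC.le
    have h₂ : 0 < x * (A * M ^ 2 + B * M + C) := mul_pos hx hM
    have h₃ : 0 ≤ (-A) * x * M * (M - x) :=
      mul_nonneg (by positivity [neg_nonneg.2 hA]) (sub_nonneg.2 hxM)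
    linarith
  exact pos_of_mul_pos_right (key ▸ hpos) hM0.le

section

variable {n k ε : ℝ}

lemma constant_term_pos (hn : 2 ≤ n) (hk : 2 ≤ k) (hε0 : 0 < ε) (hε1 : ε < 1) :
    0 < ((2 * k - 1) * (n - 1) / 2 + 1) ^ 2 - ((k + ε) * (n - 1) / 2) ^ 2 := by
  have hdiff : 0 < (k - 1 - ε) * (n - 1) / 2 + 1 := by nlinarith
  have hsum : 0 < (3 * k - 1 + ε) * (n - 1) / 2 + 1 := by nlinarith
  have hfactor : ((2 * k - 1) * (n - 1) / 2 + 1) ^ 2 - ((k + ε) * (n - 1) / 2) ^ 2 =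
      ((k - 1 - ε) * (n - 1) / 2 + 1) * ((3 * k - 1 + ε) * (n - 1) / 2 + 1) := by ring
  exact hfactor ▸ mul_pos hdiff hsum

lemma value_at_endpoint_mul_eq (hε : ε ≠ 0) :
    4 * ε ^ 2 * ((k ^ 2 - (k + ε) ^ 2) * ((n - 1) * (k - 2) / (2 * ε) + 1) ^ 2
      + ((n - 1) * (k ^ 2 - (1 + 2 * ε) * k - ε ^ 2) + 2 * k) * ((n - 1) * (k - 2) / (2 * ε) + 1)
      + (((2 * k - 1) * (n - 1) / 2 + 1) ^ 2 - ((k + ε) * (n - 1) / 2) ^ 2)) =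
      ε * (1 - ε) * (n + 1) *
        (ε * (5 + ε) * (n + 1) + 4 * (k - 2) * (n - 1 + ε * n) + 2 * (k - 2) ^ 2 * (n - 1)) := by
  field_simp
  ring

lemma value_at_endpoint_pos (hn : 2 ≤ n) (hk : 2 ≤ k) (hε0 : 0 < ε) (hε1 : ε < 1) :
    0 < (k ^ 2 - (k + ε) ^ 2) * ((n - 1) * (k - 2) / (2 * ε) + 1) ^ 2
      + ((n - 1) * (k ^ 2 - (1 + 2 * ε) * k - ε ^ 2) + 2 * k) * ((n - 1) * (k - 2) / (2 * ε) + 1)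
      + (((2 * k - 1) * (n - 1) / 2 + 1) ^ 2 - ((k + ε) * (n - 1) / 2) ^ 2) := by
  have hk2 : 0 ≤ k - 2 := by linarith
  have hn1 : 0 ≤ n - 1 := by linarith
  have hbracket :
      0 < ε * (5 + ε) * (n + 1) + 4 * (k - 2) * (n - 1 + ε * n) + 2 * (k - 2) ^ 2 * (n - 1) := by
    have h₁ : 0 < ε * (5 + ε) * (n + 1) := by
      have : 0 < n + 1 := by linarith
      positivity
    have h₂ : 0 ≤ 4 * (k - 2) * (n - 1 + ε * n) := by
      have : 0 ≤ ε * n := by nlinarith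
      positivity
    have h₃ : 0 ≤ 2 * (k - 2) ^ 2 * (n - 1) := by positivity
    linarith
  have hrhs :=
    mul_pos (mul_pos (mul_pos hε0 (sub_pos.2 hε1)) (by linarith : 0 < n + 1)) hbracket
  rw [← value_at_endpoint_mul_eq hε0.ne'] at hrhs
  exact pos_of_mul_pos_right hrhs (by positivity)

end

theorem stmt_8_general (n k m : ℕ) (hn : 2 ≤ n) (hk : 2 ≤ k)
    (ε : ℝ) (hε0 : 0 < ε) (hε1 : ε < 1)
    (hmle : (m : ℝ) ≤ ((n : ℝ) - 1) * ((k : ℝ) - 2) / (2 * ε) + 1) :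
    let A : ℝ := (k : ℝ) ^ 2 - ((k : ℝ) + ε) ^ 2
    let B : ℝ := ((n : ℝ) - 1) * ((k : ℝ) ^ 2 - (1 + 2 * ε) * (k : ℝ) - ε ^ 2) + 2 * (k : ℝ)
    let C : ℝ := ((2 * (k : ℝ) - 1) * ((n : ℝ) - 1) / 2 + 1) ^ 2
        - (((k : ℝ) + ε) * ((n : ℝ) - 1) / 2) ^ 2
    A * (m : ℝ) ^ 2 + B * (m : ℝ) + C > 0 := by
  intro A B C
  have hn' : (2 : ℝ) ≤ n := by exact_mod_cast hn
  have hk' : (2 : ℝ) ≤ k := by exact_mod_cast hk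
  have hA : A ≤ 0 := by nlinarith
  exact quadratic_pos_of_mem_Icc hA (constant_term_pos hn' hk' hε0 hε1)
    (value_at_endpoint_pos hn' hk' hε0 hε1) m.cast_nonneg hmle

/-- For `n ≥ 2`, `k ≥ 2`, `m ≥ 1` integers, `0 < ε < 1` with `m ≤ (n-1)(k-2)/(2ε) + 1`, the
quadratic `Am² + Bm + C` is positive, where `A = k² - (k+ε)²`,
`B = (n-1)(k² - (1+2ε)k - ε²) + 2k`, `C = ((2k-1)(n-1)/2 + 1)² - ((k+ε)(n-1)/2)²`. -/
theorem stmt_8 (n k m : ℕ) (hn : 2 ≤ n) (hk : 2 ≤ k) (hm : 1 ≤ m)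
    (ε : ℝ) (hε0 : 0 < ε) (hε1 : ε < 1)
    (hmle : (m : ℝ) ≤ ((n : ℝ) - 1) * ((k : ℝ) - 2) / (2 * ε) + 1) :
    let A : ℝ := (k : ℝ) ^ 2 - ((k : ℝ) + ε) ^ 2
    let B : ℝ := ((n : ℝ) - 1) * ((k : ℝ) ^ 2 - (1 + 2 * ε) * (k : ℝ) - ε ^ 2) + 2 * (k : ℝ)
    let C : ℝ := ((2 * (k : ℝ) - 1) * ((n : ℝ) - 1) / 2 + 1) ^ 2
        - (((k : ℝ) + ε) * ((n : ℝ) - 1) / 2) ^ 2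
    A * (m : ℝ) ^ 2 + B * (m : ℝ) + C > 0 :=
  stmt_8_general n k m hn hk ε hε0 hε1 hmle
end

section
/- Let n ≥ 2, k ≥ 2, m ≥ 1 be integers, let 0 ≤ ε < 1 be real, and suppose k - 2 ≥ (2ε/(n-1))·(m-1). Then for every integer i with 0 ≤ i ≤ ⌊(n-1)/2⌋, (k(m+n-1) + 1 - i)·(k(m+n-1) + 1 - (n-1) + i) > (k+ε)²·(m+n-1-i)·(m+i). -/
/-!
With `s = (n - 1) / 2` and `t = s - i`, the two paired factors on the left are `A ± t` for the
centre `A = k(m + n - 1) + 1 - s`, and those on the right are `m + s ± t`. Both sides are thus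
differences of squares, `A² - t²` and `(k + ε)² ((m + s)² - t²)`; since `(k + ε)² ≥ 1`, it
suffices to compare the centres, `(k + ε)(m + s) < A`, and the hypothesis on `k - 2` makes the
gap at least `(1 - ε)(s + 1) > 0`.
-/

variable {R : Type*} [CommRing R] [LinearOrder R] [IsStrictOrderedRing R]

theorem sq_mul_sq_sub_sq_lt_sq_sub_sq {A M c : R} (t : R) (hc : 1 ≤ c) (hM : 0 ≤ M)
    (hMA : c * M < A) : c ^ 2 * (M ^ 2 - t ^ 2) < A ^ 2 - t ^ 2 := by
  have hcM : 0 ≤ c * M := mul_nonneg (by linarith) hM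
  have hcenter : (c * M) ^ 2 < A ^ 2 := pow_lt_pow_left₀ hMA hcM two_ne_zero
  have hc2 : 1 ≤ c ^ 2 := one_le_pow₀ hc
  nlinarith [mul_le_mul_of_nonneg_right hc2 (sq_nonneg t)]

theorem central_factor_lt {k m s ε : R} (hε : ε < 1) (hs : -1 < s)
    (h : ε * (m - 1) ≤ (k - 2) * s) : (k + ε) * (m + s) < k * (m + 2 * s) + 1 - s := by
  have hgap : 0 < (1 - ε) * (s + 1) := mul_pos (by linarith) (by linarith)
  linear_combination hgap + h

theorem stmt_10_general (n k m : ℕ) (hn : 2 ≤ n) (hk : 2 ≤ k)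
    (ε : ℝ) (hε0 : 0 ≤ ε) (hε1 : ε < 1)
    (h : (k : ℝ) - 2 ≥ (2 * ε / ((n : ℝ) - 1)) * ((m : ℝ) - 1)) :
    ∀ i : ℕ, i ≤ (n - 1) / 2 →
      ((k : ℝ) * ((m : ℝ) + n - 1) + 1 - i) * ((k : ℝ) * ((m : ℝ) + n - 1) + 1 - ((n : ℝ) - 1) + i)
        > ((k : ℝ) + ε) ^ 2 * ((m : ℝ) + n - 1 - i) * ((m : ℝ) + i) := by
  intro i _
  obtain ⟨s, hs⟩ : ∃ s : ℝ, (n : ℝ) = 2 * s + 1 := ⟨((n : ℝ) - 1) / 2, by ring⟩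
  have hs_pos : 0 < s := by
    have : (2 : ℝ) ≤ n := by exact_mod_cast hn
    linarith
  have hslope : ε * ((m : ℝ) - 1) ≤ ((k : ℝ) - 2) * s := by
    rw [hs, ge_iff_le, div_mul_eq_mul_div, div_le_iff₀ (by linarith)] at h
    linarith
  have hk' : (2 : ℝ) ≤ k := by exact_mod_cast hk
  rw [hs, gt_iff_lt]
  calc _ = ((k : ℝ) + ε) ^ 2 * (((m : ℝ) + s) ^ 2 - (s - i) ^ 2) := by ring
    _ < ((k : ℝ) * (m + 2 * s) + 1 - s) ^ 2 - (s - i) ^ 2 :=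
      sq_mul_sq_sub_sq_lt_sq_sub_sq _ (by linarith) (by positivity)
        (central_factor_lt hε1 (by linarith) hslope)
    _ = _ := by ring

/-- The factor-by-factor inequality: for `0 ≤ i ≤ ⌊(n-1)/2⌋`,
`(k(m+n-1)+1-i)(k(m+n-1)+1-(n-1)+i) > (k+ε)²(m+n-1-i)(m+i)`. -/
theorem stmt_10 (n k m : ℕ) (hn : 2 ≤ n) (hk : 2 ≤ k) (hm : 1 ≤ m)
    (ε : ℝ) (hε0 : 0 ≤ ε) (hε1 : ε < 1)
    (h : (k : ℝ) - 2 ≥ (2 * ε / ((n : ℝ) - 1)) * ((m : ℝ) - 1)) :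
    ∀ i : ℕ, i ≤ (n - 1) / 2 →
      ((k : ℝ) * ((m : ℝ) + n - 1) + 1 - i) * ((k : ℝ) * ((m : ℝ) + n - 1) + 1 - ((n : ℝ) - 1) + i)
        > ((k : ℝ) + ε) ^ 2 * ((m : ℝ) + n - 1 - i) * ((m : ℝ) + i) :=
  stmt_10_general n k m hn hk ε hε0 hε1 h
end

section
/- Let n ≥ 2, m ≥ 1, s ≥ 2^n be integers, let k = ⌊s^{1/n}⌋ and let ε = s^{1/n} - k be the fractional part of s^{1/n}. If k - 2 ≥ (2ε/(n-1))·(m-1), then binom(k(m+n-1)+1, n) > binom(m+n-1, n)·s. -/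
/-!
Put `r = s^{1/n} = k + ε`, `M = m + n - 1` and `X = k M + 1`; the claim is
`M (M - 1) ⋯ (M - n + 1) · r ^ n < X (X - 1) ⋯ (X - n + 1)`. Pair the factor of index `i` with
that of index `j = n - 1 - i`: writing `X - i = r (M - i) + x_i`, the numbers `x_i` increase
with `i`, and `r² (M - i) (M - j) < (X - i) (X - j)` as soon as `x_i + x_j > 0`, that is
`2 (X - r M) + (r - 1) (n - 1) > 0`. Since `2 (X - r M) + (r - 1) (n - 1)` equals
`(1 - ε) (n + 1) + (n - 1) (k - 2) - 2 ε (m - 1)`, this is exactly where the hypothesis on `k - 2`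
enters. Multiplying the paired inequalities compares the squares of the two products.
-/

open Finset

lemma cast_descFactorial_eq_prod_range {R : Type*} [CommRing R] (N n : ℕ) :
    (N.descFactorial n : R) = ∏ i ∈ range n, ((N : R) - i) := by
  rw [← descPochhammer_eval_eq_descFactorial, descPochhammer_eval_eq_prod_range]

lemma mul_sub_mul_mul_sub_lt_sub_mul_sub {r X M i j : ℝ} (hr : 1 ≤ r) (hij : i ≤ j) (hjM : j < M)
    (h : 0 < 2 * (X - r * M) + (r - 1) * (i + j)) :
    r * (M - i) * (r * (M - j)) < (X - i) * (X - j) := by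
  set x := X - r * M + (r - 1) * i
  set y := X - r * M + (r - 1) * j
  have hy : 0 ≤ y := by nlinarith [mul_nonneg (sub_nonneg.2 hr) (sub_nonneg.2 hij)]
  have hexcess : (X - i) * (X - j) - r * (M - i) * (r * (M - j)) =
      r * (M - j) * (x + y) + (j - i) * y + y ^ 2 := by ring
  have : 0 < r * (M - j) * (x + y) := mul_pos (mul_pos (by linarith) (by linarith)) (by linarith)
  linarith [mul_nonneg (sub_nonneg.2 hij) hy, sq_nonneg y]

lemma prod_range_lt_prod_range_of_mul_reflect_lt {R : Type*} [CommRing R] [LinearOrder R]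
    [IsStrictOrderedRing R] {n : ℕ} {f g : ℕ → R} (hn : 0 < n) (hg : ∀ i < n, 0 < g i)
    (hf : 0 ≤ ∏ i ∈ range n, f i) (h : ∀ i < n, g i * g (n - 1 - i) < f i * f (n - 1 - i)) :
    ∏ i ∈ range n, g i < ∏ i ∈ range n, f i := by
  have hsq (u : ℕ → R) : (∏ i ∈ range n, u i) ^ 2 = ∏ i ∈ range n, u i * u (n - 1 - i) := by
    rw [prod_mul_distrib, prod_range_reflect, sq]
  refine lt_of_pow_lt_pow_left₀ 2 hf ?_
  rw [hsq, hsq]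
  refine prod_lt_prod_of_nonempty (fun i hi => ?_) (fun i hi => h i (mem_range.1 hi))
    (nonempty_range_iff.2 hn.ne')
  have hi := mem_range.1 hi
  exact mul_pos (hg i hi) (hg _ (by omega))

theorem descFactorial_mul_pow_lt_descFactorial {n M X : ℕ} {r : ℝ} (hn : 0 < n) (hnM : n ≤ M)
    (hr : 1 ≤ r) (h : 0 < 2 * (X - r * M) + (r - 1) * (n - 1)) :
    (M.descFactorial n : ℝ) * r ^ n < X.descFactorial n := by
  have hprod : (M.descFactorial n : ℝ) * r ^ n = ∏ i ∈ range n, r * ((M : ℝ) - i) := by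
    rw [cast_descFactorial_eq_prod_range, prod_mul_distrib, prod_const, card_range, mul_comm]
  rw [hprod, cast_descFactorial_eq_prod_range]
  refine prod_range_lt_prod_range_of_mul_reflect_lt hn (fun i hi => ?_) ?_ (fun i hi => ?_)
  · have : (i : ℝ) + 1 ≤ M := by exact_mod_cast hi.trans_le hnM
    exact mul_pos (by linarith) (by linarith)
  · rw [← cast_descFactorial_eq_prod_range]
    positivity
  · have hj : ((n - 1 - i : ℕ) : ℝ) = n - 1 - i := by
      rw [Nat.cast_sub (by omega), Nat.cast_sub hn]; simp
    have hnM' : (n : ℝ) ≤ M := by exact_mod_cast hnM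
    have hi' : (i : ℝ) + 1 ≤ n := by exact_mod_cast hi
    rw [hj]
    rcases le_total (i : ℝ) (n - 1 - i) with hij | hji
    · exact mul_sub_mul_mul_sub_lt_sub_mul_sub hr hij (by linarith) (by linarith)
    · rw [mul_comm (r * _), mul_comm ((X : ℝ) - i)]
      exact mul_sub_mul_mul_sub_lt_sub_mul_sub hr hji (by linarith) (by linarith)

theorem choose_mul_lt_choose {n M X s : ℕ} {r : ℝ} (hn : 0 < n) (hnM : n ≤ M) (hr : 1 ≤ r)
    (hrs : r ^ n = s) (h : 0 < 2 * (X - r * M) + (r - 1) * (n - 1)) :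
    M.choose n * s < X.choose n := by
  have := descFactorial_mul_pow_lt_descFactorial hn hnM hr h
  rw [hrs] at this
  have : M.descFactorial n * s < X.descFactorial n := by exact_mod_cast this
  rw [Nat.descFactorial_eq_factorial_mul_choose, Nat.descFactorial_eq_factorial_mul_choose,
    mul_assoc] at this
  exact Nat.lt_of_mul_lt_mul_left this

/-- For `n ≥ 2`, `m ≥ 1`, `s ≥ 2^n`, with `k = ⌊s^{1/n}⌋` and `ε = s^{1/n} - k`, if
`k - 2 ≥ (2ε/(n-1))(m-1)` then `binom(k(m+n-1)+1, n) > binom(m+n-1, n)·s`. -/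
theorem stmt_11 (n m s : ℕ) (hn : 2 ≤ n) (hm : 1 ≤ m) (hs : 2 ^ n ≤ s) :
    let k : ℕ := ⌊(s : ℝ) ^ ((n : ℝ)⁻¹)⌋₊
    let ε : ℝ := (s : ℝ) ^ ((n : ℝ)⁻¹) - k
    (k : ℝ) - 2 ≥ (2 * ε / ((n : ℝ) - 1)) * ((m : ℝ) - 1) →
      (k * (m + n - 1) + 1).choose n > (m + n - 1).choose n * s := by
  intro k ε hyp
  set r : ℝ := (s : ℝ) ^ ((n : ℝ)⁻¹)
  have hs1 : (1 : ℝ) ≤ s := by exact_mod_cast (Nat.one_le_two_pow).trans hs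
  have hr : 1 ≤ r := Real.one_le_rpow hs1 (by positivity)
  have hε : ε < 1 := by have := Nat.lt_floor_add_one r; simp only [ε]; linarith
  have hn' : (2 : ℝ) ≤ n := by exact_mod_cast hn
  have hyp' : 2 * ε * (m - 1) ≤ (n - 1) * (k - 2) := by
    rwa [ge_iff_le, div_mul_eq_mul_div, div_le_iff₀ (by linarith), mul_comm (k - 2 : ℝ)] at hyp
  refine choose_mul_lt_choose (by omega) (by omega) hr
    (Real.rpow_inv_natCast_pow (by positivity) (by omega)) ?_
  have hM : ((m + n - 1 : ℕ) : ℝ) = m + n - 1 := by rw [Nat.cast_sub (by omega)]; push_cast; ring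
  have hrk : r = k + ε := by simp only [ε]; ring
  push_cast [hM, hrk]
  nlinarith [mul_pos (sub_pos.2 hε) (by linarith : (0 : ℝ) < n - 1)]
end

section
/- Let n ≥ 2, m ≥ 1, s ≥ 2^n be integers, k = ⌊s^{1/n}⌋, ε = s^{1/n} - k, and suppose k - 2 ≥ (2ε/(n-1))·(m-1). Then the product over i = 0,…,⌊(n-1)/2⌋ of the pairwise inequalities yields (k(m+n-1)+1)·(k(m+n-1))⋯(k(m+n-1)+1-(n-1)) > (m+n-1)(m+n-2)⋯m·(k+ε)^n. -/
/-!
Write `A = k(m+n-1)+1`, `B = m+n-1`, `X = k+ε`, so that the two sides are `∏ (A - i)` and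
`∏ (B - i) X` over `i < n`. Pairing the factor `i` with `n-1-i` (so that `i + j = n-1`) gives
`4 (A - i)(A - j) = (2A - (n-1))² - (i - j)²` and `4 (B - i)(B - j) X² = ((2B - (n-1)) X)² - (i - j)² X²`.
The hypothesis on `k` and `ε` (together with `ε < 1`) is exactly what makes `(2B - (n-1)) X < 2A - (n-1)`;
as `X ≥ 1`, every paired product is then strictly larger on the left, and multiplying the `n`
pairs compares the squares of the two sides.
-/

open Finset

theorem Finset.prod_range_lt_prod_of_mul_reflect_lt {R : Type*} [CommSemiring R] [LinearOrder R]
    [IsStrictOrderedRing R] {n : ℕ} (hn : n ≠ 0) {f g : ℕ → R} (hg : ∀ i < n, 0 < g i)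
    (hf : ∀ i < n, 0 ≤ f i) (h : ∀ i < n, g i * g (n - 1 - i) < f i * f (n - 1 - i)) :
    ∏ i ∈ range n, g i < ∏ i ∈ range n, f i := by
  have sq_eq (u : ℕ → R) : (∏ i ∈ range n, u i) ^ 2 = ∏ i ∈ range n, u i * u (n - 1 - i) := by
    rw [prod_mul_distrib, prod_range_reflect u n, sq]
  refine lt_of_pow_lt_pow_left₀ 2 (prod_nonneg fun i hi ↦ hf i (mem_range.1 hi)) ?_
  rw [sq_eq, sq_eq]
  refine prod_lt_prod_of_nonempty (fun i hi ↦ ?_) (fun i hi ↦ h i (mem_range.1 hi))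
    (nonempty_range_iff.2 hn)
  have hi := mem_range.1 hi
  exact mul_pos (hg i hi) (hg _ (by omega))

theorem sub_mul_mul_sub_mul_lt {A B X N i j : ℝ} (hij : i + j = N) (hX : 1 ≤ X)
    (h0 : 0 ≤ (2 * B - N) * X) (h : (2 * B - N) * X < 2 * A - N) :
    (B - i) * X * ((B - j) * X) < (A - i) * (A - j) := by
  subst hij
  have hsq : ((2 * B - (i + j)) * X) ^ 2 < (2 * A - (i + j)) ^ 2 := by gcongr
  have hX2 : (i - j) ^ 2 ≤ (i - j) ^ 2 * X ^ 2 :=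
    le_mul_of_one_le_right (sq_nonneg _) (one_le_pow₀ hX)
  nlinarith

theorem two_le_floor_rpow_inv {n s : ℕ} (hn : n ≠ 0) (hs : 2 ^ n ≤ s) :
    2 ≤ ⌊(s : ℝ) ^ (n : ℝ)⁻¹⌋₊ := by
  refine Nat.le_floor ?_
  rw [Nat.cast_ofNat, Real.le_rpow_inv_iff_of_pos (by norm_num) (by positivity)
    (by positivity), Real.rpow_natCast]
  exact_mod_cast hs

/-- `2(m+n-1) - (n-1)` and `2(k(m+n-1)+1) - (n-1)` are twice the midpoints of the two
progressions `m+n-1, …, m` and `k(m+n-1)+1, …, k(m+n-1)+1-(n-1)`. -/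
theorem scaled_midpoint_lt {k ε m n : ℝ} (hn : 0 ≤ n) (hε : ε < 1)
    (h : 2 * ε * (m - 1) ≤ (k - 2) * (n - 1)) :
    (2 * (m + n - 1) - (n - 1)) * (k + ε) < 2 * (k * (m + n - 1) + 1) - (n - 1) := by
  nlinarith [mul_pos (show 0 < n + 1 by linarith) (sub_pos.2 hε)]

/-- Under the hypothesis `k - 2 ≥ (2ε/(n-1))(m-1)`, the falling-factorial inequality
`(k(m+n-1)+1)·(k(m+n-1))⋯(k(m+n-1)+1-(n-1)) > (m+n-1)(m+n-2)⋯m·(k+ε)^n` holds,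
where `k = ⌊s^{1/n}⌋` and `ε = s^{1/n} - k`. -/
theorem stmt_12 (n m s : ℕ) (hn : 2 ≤ n) (hm : 1 ≤ m) (hs : 2 ^ n ≤ s) :
    let k : ℕ := ⌊(s : ℝ) ^ ((n : ℝ)⁻¹)⌋₊
    let ε : ℝ := (s : ℝ) ^ ((n : ℝ)⁻¹) - k
    (k : ℝ) - 2 ≥ (2 * ε / ((n : ℝ) - 1)) * ((m : ℝ) - 1) →
      (∏ i ∈ Finset.range n, ((k : ℝ) * ((m : ℝ) + n - 1) + 1 - i))
        > (∏ i ∈ Finset.range n, ((m : ℝ) + n - 1 - i)) * ((k : ℝ) + ε) ^ n := by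
  intro k ε h
  have hk : (2 : ℝ) ≤ k := by exact_mod_cast two_le_floor_rpow_inv (by omega) hs
  have hε0 : 0 ≤ ε := sub_nonneg.2 (Nat.floor_le (by positivity))
  have hε1 : ε < 1 := by
    have := Nat.lt_floor_add_one ((s : ℝ) ^ (n : ℝ)⁻¹)
    simp only [ε]
    linarith
  have hn1 : (1 : ℝ) < n := by exact_mod_cast hn
  have hm1 : (1 : ℝ) ≤ m := by exact_mod_cast hm
  rw [ge_iff_le, div_mul_eq_mul_div, div_le_iff₀ (by linarith)] at h
  have hmid := scaled_midpoint_lt (by positivity) hε1 h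
  rw [gt_iff_lt, pow_eq_prod_const, ← prod_mul_distrib]
  refine prod_range_lt_prod_of_mul_reflect_lt (by omega) (fun i hi ↦ ?_) (fun i hi ↦ ?_)
    (fun i hi ↦ ?_)
  all_goals have hi' : (i : ℝ) + 1 ≤ n := by exact_mod_cast hi
  · nlinarith
  · nlinarith
  · have hij : (i : ℝ) + (n - 1 - i : ℕ) = n - 1 := by
      rw [eq_sub_iff_add_eq]
      exact_mod_cast (by omega : i + (n - 1 - i) + 1 = n)
    exact sub_mul_mul_sub_mul_lt hij (by linarith) (by nlinarith) hmid
end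

section
/- Let n ≥ 2, m ≥ 1 be integers and let s be a positive integer such that s^{1/n} is an integer k ≥ 2 (i.e., s = k^n). Then binom(k(m+n-1)+1, n) > binom(m+n-1, n)·k^n. -/
/-! Writing `binom(N, n) = N(N-1)⋯(N-n+1)/n!`, the claim compares `n` factors pairwise: for
`i < n ≤ M` one has `k(M - i) ≤ kM - i < kM + 1 - i`, so already `binom(kM + 1, n) > binom(M, n) kⁿ`
for every `k ≥ 1`, applied with `M = m + n - 1`. -/

namespace Nat

theorem descFactorial_mul_pow_lt_descFactorial_mul_add_one {n M k : ℕ} (hn : 0 < n)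
    (hnM : n ≤ M) (hk : 0 < k) : M.descFactorial n * k ^ n < (k * M + 1).descFactorial n := by
  rw [descFactorial_eq_prod_range, descFactorial_eq_prod_range, Finset.pow_eq_prod_const,
    ← Finset.prod_mul_distrib]
  refine Finset.prod_lt_prod_of_nonempty (fun i hi => ?_) (fun i hi => ?_) ⟨0, by simpa⟩
  all_goals have hin : i < n := Finset.mem_range.mp hi
  · exact Nat.mul_pos (by omega) hk
  · have hik : i ≤ k * i := Nat.le_mul_of_pos_left i hk
    have hkiM : k * i ≤ k * M := Nat.mul_le_mul_left k (by omega)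
    calc (M - i) * k = k * M - k * i := by rw [Nat.sub_mul, Nat.mul_comm M, Nat.mul_comm i]
      _ < k * M + 1 - i := by omega

theorem choose_mul_pow_lt_choose_mul_add_one {n M k : ℕ} (hn : 0 < n) (hnM : n ≤ M)
    (hk : 0 < k) : M.choose n * k ^ n < (k * M + 1).choose n := by
  have h := descFactorial_mul_pow_lt_descFactorial_mul_add_one hn hnM hk
  rw [descFactorial_eq_factorial_mul_choose, descFactorial_eq_factorial_mul_choose,
    Nat.mul_assoc] at h
  exact Nat.lt_of_mul_lt_mul_left h

end Nat

/-- For `n ≥ 2`, `m ≥ 1`, and `s = k^n` with `k ≥ 2` an integer,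
`binom(k(m+n-1)+1, n) > binom(m+n-1, n)·s`. -/
theorem stmt_15 (n m k s : ℕ) (hn : 2 ≤ n) (hm : 1 ≤ m) (hk : 2 ≤ k) (hs : s = k ^ n) :
    (k * (m + n - 1) + 1).choose n > (m + n - 1).choose n * s :=
  hs ▸ Nat.choose_mul_pow_lt_choose_mul_add_one (by omega) (by omega) (by omega)
end
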